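/- arXiv:1804.02026 — 7 statements merged into one kernel-verified Lean document; each statement's English description precedes it below -/
import Mathlib

section
/- Let H be a complex Hilbert space and (aₙ)ₙ a bounded sequence in L(H) with Re⟨aₙ x, x⟩ ≥ c‖x‖² for all n and all x, for some c > 0. If aₙ⁻¹ → b in the weak operator topology for some b ∈ L(H), then b is boundedly invertible, ‖b⁻¹‖ ≤ (supₙ‖aₙ‖²)/c, and Re⟨b⁻¹ y, y⟩ ≥ c‖y‖² for all y. -/
/-! With `M = supₙ ‖aₙ‖`, coercivity `Re aₙ ≥ c` turns into two properties of `aₙ⁻¹`: cocoercivity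
`c ‖aₙ⁻¹ y‖² ≤ Re ⟪aₙ⁻¹ y, y⟫`, and, since `‖y‖ ≤ M ‖aₙ⁻¹ y‖`, coercivity `Re aₙ⁻¹ ≥ c / M²`. Both
are closed in the weak operator topology, so `b` inherits them. A coercive operator is bounded below
and its range has trivial orthogonal complement, so `b` is invertible with `‖b⁻¹‖ ≤ M² / c`; finally
cocoercivity of `b` is coercivity of `b⁻¹`. -/

open scoped InnerProductSpace
open Filter Topology RCLike

namespace ContinuousLinearMap

variable {𝕜 E : Type*} [RCLike 𝕜] [NormedAddCommGroup E] [InnerProductSpace 𝕜 E]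

def IsCoerciveWith (c : ℝ) (T : E →L[𝕜] E) : Prop :=
  ∀ x, c * ‖x‖ ^ 2 ≤ re ⟪T x, x⟫_𝕜

def IsCocoerciveWith (c : ℝ) (T : E →L[𝕜] E) : Prop :=
  ∀ x, c * ‖T x‖ ^ 2 ≤ re ⟪T x, x⟫_𝕜

variable {c : ℝ} {S T : E →L[𝕜] E}

theorem isCoerciveWith_iff_isCocoerciveWith (hST : S * T = 1) (hTS : T * S = 1) :
    IsCoerciveWith c S ↔ IsCocoerciveWith c T := by
  constructor
  · intro hS y
    have := hS (T y)
    rwa [show S (T y) = y from DFunLike.congr_fun hST y, inner_re_symm] at this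
  · intro hT x
    have := hT (S x)
    rwa [show T (S x) = x from DFunLike.congr_fun hTS x, inner_re_symm] at this

theorem IsCoerciveWith.le_opNorm [Nontrivial E] (hT : IsCoerciveWith c T) : c ≤ ‖T‖ := by
  obtain ⟨x, hx⟩ := exists_ne (0 : E)
  refine le_of_mul_le_mul_right ?_ (pow_pos (norm_pos_iff.2 hx) 2)
  calc c * ‖x‖ ^ 2 ≤ re ⟪T x, x⟫_𝕜 := hT x
    _ ≤ ‖T x‖ * ‖x‖ := re_inner_le_norm _ _
    _ ≤ ‖T‖ * ‖x‖ * ‖x‖ := by gcongr; exact T.le_opNorm x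
    _ = ‖T‖ * ‖x‖ ^ 2 := by ring

theorem IsCocoerciveWith.isCoerciveWith_div_sq {M : ℝ} (hT : IsCocoerciveWith c T) (hc : 0 ≤ c)
    (hST : S * T = 1) (hS : ‖S‖ ≤ M) : IsCoerciveWith (c / M ^ 2) T := by
  intro y
  have hy : ‖y‖ ≤ M * ‖T y‖ := by
    simpa [show S (T y) = y from DFunLike.congr_fun hST y] using S.le_of_opNorm_le hS (T y)
  calc c / M ^ 2 * ‖y‖ ^ 2 ≤ c / M ^ 2 * (M * ‖T y‖) ^ 2 := by gcongr
    _ = c / M ^ 2 * M ^ 2 * ‖T y‖ ^ 2 := by ring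
    _ ≤ c * ‖T y‖ ^ 2 := by
          gcongr
          rcases eq_or_ne M 0 with rfl | hM0
          · simpa using hc
          · rw [div_mul_cancel₀ c (pow_ne_zero 2 hM0)]
    _ ≤ re ⟪T y, y⟫_𝕜 := hT y

section Limits

variable {ι : Type*} {l : Filter ι} [l.NeBot] {A : ι → E →L[𝕜] E} {B : E →L[𝕜] E}

theorem isCoerciveWith_of_tendsto_inner (hA : ∀ i, IsCoerciveWith c (A i))
    (hB : ∀ x y, Tendsto (fun i => ⟪A i x, y⟫_𝕜) l (𝓝 ⟪B x, y⟫_𝕜)) : IsCoerciveWith c B :=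
  fun x => ge_of_tendsto' ((continuous_re.tendsto _).comp (hB x x)) fun i => hA i x

theorem isCocoerciveWith_of_tendsto_inner (hc : 0 ≤ c) (hA : ∀ i, IsCocoerciveWith c (A i))
    (hB : ∀ x y, Tendsto (fun i => ⟪A i x, y⟫_𝕜) l (𝓝 ⟪B x, y⟫_𝕜)) : IsCocoerciveWith c B := by
  intro y
  -- AM-GM removes `‖A i y‖`, which need not converge;
  -- in the limit `⟪A i y, B y⟫` becomes `‖B y‖ ^ 2`.
  have key : ∀ i, 2 * c * re ⟪A i y, B y⟫_𝕜 ≤ re ⟪A i y, y⟫_𝕜 + c * ‖B y‖ ^ 2 := fun i =>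
    calc 2 * c * re ⟪A i y, B y⟫_𝕜 ≤ 2 * c * (‖A i y‖ * ‖B y‖) := by
          gcongr; exact re_inner_le_norm _ _
      _ ≤ c * ‖A i y‖ ^ 2 + c * ‖B y‖ ^ 2 := by
          nlinarith [mul_nonneg hc (sq_nonneg (‖A i y‖ - ‖B y‖))]
      _ ≤ re ⟪A i y, y⟫_𝕜 + c * ‖B y‖ ^ 2 := by gcongr; exact hA i y
  have lim := le_of_tendsto_of_tendsto'
    (((continuous_re.tendsto _).comp (hB y (B y))).const_mul (2 * c))
    (((continuous_re.tendsto _).comp (hB y y)).add_const _) key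
  rw [inner_self_eq_norm_sq] at lim
  linarith

end Limits

theorem IsCoerciveWith.norm_le_inv_mul (hT : IsCoerciveWith c T) (hc : 0 < c) (x : E) :
    ‖x‖ ≤ c⁻¹ * ‖T x‖ := by
  rcases (norm_nonneg x).eq_or_lt with hx | hx
  · rw [← hx]; positivity
  rw [le_inv_mul_iff₀ hc]
  refine le_of_mul_le_mul_right ?_ hx
  calc c * ‖x‖ * ‖x‖ = c * ‖x‖ ^ 2 := by ring
    _ ≤ re ⟪T x, x⟫_𝕜 := hT x
    _ ≤ ‖T x‖ * ‖x‖ := re_inner_le_norm _ _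

theorem IsCoerciveWith.antilipschitz (hT : IsCoerciveWith c T) (hc : 0 < c) :
    AntilipschitzWith c⁻¹.toNNReal T :=
  T.antilipschitz_of_bound fun x => by
    rw [Real.coe_toNNReal _ (by positivity)]; exact hT.norm_le_inv_mul hc x

variable [CompleteSpace E]

theorem IsCoerciveWith.surjective (hT : IsCoerciveWith c T) (hc : 0 < c) :
    Function.Surjective T := by
  have hclosed : IsClosed (Set.range T) :=
    (hT.antilipschitz hc).isClosed_range T.uniformContinuous
  have hdense : Dense (Set.range T) := by
    change Dense ((LinearMap.range (T : E →ₗ[𝕜] E) : Set E))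
    rw [Submodule.dense_iff_topologicalClosure_eq_top, Submodule.topologicalClosure_eq_top_iff,
      Submodule.eq_bot_iff]
    intro z hz
    have h0 : ⟪T z, z⟫_𝕜 = 0 := hz (T z) ⟨z, rfl⟩
    have hz0 : c * ‖z‖ ^ 2 ≤ 0 := by simpa [h0] using hT z
    simpa using nonpos_of_mul_nonpos_right hz0 hc
  rw [← Set.range_eq_univ, ← hclosed.closure_eq, hdense.closure_eq]

theorem IsCoerciveWith.isUnit (hT : IsCoerciveWith c T) (hc : 0 < c) : IsUnit T :=
  isUnit_iff_bijective.2 ⟨(hT.antilipschitz hc).injective, hT.surjective hc⟩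

theorem IsCoerciveWith.norm_inverse_le (hT : IsCoerciveWith c T) (hc : 0 < c) :
    ‖Ring.inverse T‖ ≤ c⁻¹ :=
  opNorm_le_bound _ (by positivity) fun y => by
    simpa [show T (Ring.inverse T y) = y from
      DFunLike.congr_fun (Ring.mul_inverse_cancel T (hT.isUnit hc)) y] using
      hT.norm_le_inv_mul hc (Ring.inverse T y)

end ContinuousLinearMap

open ContinuousLinearMap in
/-- If `(aₙ)` is bounded with `Re aₙ ≥ c > 0` and the inverses `aₙ⁻¹` converge to `b` in the
weak operator topology, then `b` is boundedly invertible with `‖b⁻¹‖ ≤ (supₙ ‖aₙ‖)²/c` and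
`Re b⁻¹ ≥ c`. -/
theorem stmt5 {H : Type*} [NormedAddCommGroup H] [InnerProductSpace ℂ H] [CompleteSpace H]
    (a ainv : ℕ → H →L[ℂ] H) (b : H →L[ℂ] H) (c : ℝ) (hc : 0 < c)
    (hbdd : BddAbove (Set.range fun n => ‖a n‖))
    (hcoer : ∀ n, ∀ x : H, c * ‖x‖ ^ 2 ≤ (⟪a n x, x⟫_ℂ).re)
    (hinv : ∀ n, a n * ainv n = 1 ∧ ainv n * a n = 1)
    (hconv : ∀ x y : H, Tendsto (fun n => ⟪ainv n x, y⟫_ℂ) atTop (nhds ⟪b x, y⟫_ℂ)) :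
    IsUnit b ∧ ‖Ring.inverse b‖ ≤ (⨆ n, ‖a n‖) ^ 2 / c ∧
      ∀ y : H, c * ‖y‖ ^ 2 ≤ (⟪Ring.inverse b y, y⟫_ℂ).re := by
  rcases subsingleton_or_nontrivial H with hH | hH
  · refine ⟨isUnit_of_subsingleton b, ?_, fun y => by simp [Subsingleton.elim y 0]⟩
    rw [Subsingleton.elim (Ring.inverse b) 0, norm_zero]
    positivity
  set M := ⨆ n, ‖a n‖
  have hM (n : ℕ) : ‖a n‖ ≤ M := le_ciSup hbdd n
  have ha (n : ℕ) : IsCoerciveWith c (a n) := hcoer n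
  have hainv (n : ℕ) : IsCocoerciveWith c (ainv n) :=
    (isCoerciveWith_iff_isCocoerciveWith (hinv n).1 (hinv n).2).1 (ha n)
  have hb : IsCoerciveWith (c / M ^ 2) b := isCoerciveWith_of_tendsto_inner
    (fun n => (hainv n).isCoerciveWith_div_sq hc.le (hinv n).1 (hM n)) hconv
  have hM0 : 0 < M := hc.trans_le ((ha 0).le_opNorm.trans (hM 0))
  have hbc : 0 < c / M ^ 2 := by positivity
  have hb_unit : IsUnit b := hb.isUnit hbc
  refine ⟨hb_unit, by simpa using hb.norm_inverse_le hbc, ?_⟩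
  exact (isCoerciveWith_iff_isCocoerciveWith (Ring.inverse_mul_cancel b hb_unit)
    (Ring.mul_inverse_cancel b hb_unit)).2 (isCocoerciveWith_of_tendsto_inner hc.le hainv hconv)
end

section
/- Let b : ℝ → ℂ be the 1-periodic extension of 𝟙_{(0,1/2)} + (1/2)·𝟙_{(1/2,1)} and define aₙ(x) := b(n x) on (0,1). Then, as multiplication operators on L²(0,1), aₙ → (3/4)·Id in the weak operator topology while aₙ⁻¹ → (3/2)·Id in the weak operator topology, and (3/2) ≠ (3/4)⁻¹. In particular, inversion is not continuous with respect to the weak operator topology on the set of operators a with Re a ≥ 1/2. -/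
open MeasureTheory Filter

/-- The 1-periodic extension of `𝟙_{(0,1/2)} + (1/2)·𝟙_{(1/2,1)}`. -/
noncomputable def bfun : ℝ → ℂ := fun x =>
  (Set.Ioo (0 : ℝ) (1 / 2)).indicator (fun _ => (1 : ℂ)) (Int.fract x) +
    (Set.Ioo (1 / 2 : ℝ) 1).indicator (fun _ => (1 / 2 : ℂ)) (Int.fract x)

open Topology

/-! The oscillating parts `b - 3/4` and `b⁻¹ - 3/2` are bounded and, almost everywhere,
antiperiodic with antiperiod `1/2`: the shift `x ↦ x + 1/2` swaps the two values `1` and `1/2`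
of `b`. For such a `φ` and `H ∈ L¹(ℝ)`, the substitution `x ↦ x + 1/(2n)` gives
`∫ φ(nx) H(x) = -∫ φ(nx) H(x + 1/(2n))`, hence `2 ‖∫ φ(nx) H‖ ≤ C ‖H(· + 1/(2n)) - H‖₁`, which
tends to `0` by continuity of translation in `L¹`. Taking `H = 𝟙_{(0,1)} f ḡ` gives both weak
operator limits. -/

section Translation

variable {G E : Type*} [NormedAddCommGroup E]
  [TopologicalSpace G] [AddGroup G] [IsTopologicalAddGroup G] [MeasurableSpace G] [BorelSpace G]
  {μ : Measure G} [μ.IsAddRightInvariant] [IsLocallyFiniteMeasure μ] [μ.InnerRegularCompactLTTop]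

theorem tendsto_integral_norm_comp_add_right_sub {H : G → E} (hH : Integrable H μ) :
    Tendsto (fun t => ∫ x, ‖H (x + t) - H x‖ ∂μ) (𝓝 0) (𝓝 0) := by
  have hmp (t : G) : MeasurePreserving (· + t) μ μ := measurePreserving_add_right μ t
  set L : G → G →₁[μ] E := fun t =>
    Lp.compMeasurePreserving (ContinuousMap.addRight t) (hmp t) (hH.toL1 H)
  have hL : Continuous L := continuous_const.compMeasurePreservingLp
    (ContinuousMap.continuous_of_continuous_uncurry _ (continuous_snd.add continuous_fst))
    hmp ENNReal.one_ne_top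
  have hL_ae (t : G) : L t =ᵐ[μ] fun x => H (x + t) :=
    (Lp.coeFn_compMeasurePreserving _ (hmp t)).trans
      ((hmp t).quasiMeasurePreserving.ae_eq_comp hH.coeFn_toL1)
  have hnorm (t : G) : ∫ x, ‖H (x + t) - H x‖ ∂μ = ‖L t - L 0‖ := by
    rw [L1.norm_eq_integral_norm]
    refine integral_congr_ae ?_
    filter_upwards [Lp.coeFn_sub (L t) (L 0), hL_ae t, hL_ae 0] with x hsub ht h0
    rw [hsub, Pi.sub_apply, ht, h0, add_zero]
  simpa [hnorm] using ((hL.sub (continuous_const (y := L 0))).norm.tendsto 0)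

end Translation

section Oscillation

variable {𝕜 : Type*} [RCLike 𝕜] {φ H : ℝ → 𝕜} {C c t : ℝ}

theorem integrable_comp_mul_mul {μ : Measure ℝ} (hμ : μ ≪ volume)
    (hφ : AEStronglyMeasurable φ) (hφC : ∀ᵐ x, ‖φ x‖ ≤ C) (ht : t ≠ 0) (hH : Integrable H μ) :
    Integrable (fun x => φ (t * x) * H x) μ :=
  have hq : Measure.QuasiMeasurePreserving (t * ·) volume volume :=
    Measure.quasiMeasurePreserving_smul volume ht
  hH.bdd_mul ((hφ.comp_quasiMeasurePreserving hq).mono_ac hμ) (hμ.ae_le (hq.ae hφC))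

theorem norm_integral_comp_mul_mul_le (hφ : AEStronglyMeasurable φ) (hφC : ∀ᵐ x, ‖φ x‖ ≤ C)
    (hanti : ∀ᵐ x, φ (x + c) = -φ x) (ht : t ≠ 0) (hH : Integrable H) :
    ‖∫ x, φ (t * x) * H x‖ ≤ C / 2 * ∫ x, ‖H (x + c / t) - H x‖ := by
  have hq : Measure.QuasiMeasurePreserving (t * ·) volume volume :=
    Measure.quasiMeasurePreserving_smul volume ht
  have hHs : Integrable (fun x => H (x + c / t)) := hH.comp_add_right _
  -- Substituting `x ↦ x + c / t` turns `φ (t * x)` into `φ (t * x + c) = -φ (t * x)`.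
  have hshift : ∫ x, φ (t * x) * H (x + c / t) = -∫ x, φ (t * x) * H x := by
    rw [← integral_add_right_eq_self (fun x => φ (t * x) * H x) (c / t), ← integral_neg]
    refine integral_congr_ae ?_
    filter_upwards [hq.ae hanti] with x hx
    rw [mul_add, mul_div_cancel₀ _ ht, hx, neg_mul, neg_neg]
  have hdouble : ∫ x, φ (t * x) * (H x - H (x + c / t)) = 2 * ∫ x, φ (t * x) * H x := by
    simp_rw [mul_sub]
    rw [integral_sub (integrable_comp_mul_mul .rfl hφ hφC ht hH)
      (integrable_comp_mul_mul .rfl hφ hφC ht hHs), hshift]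
    ring
  have hle : ‖∫ x, φ (t * x) * (H x - H (x + c / t))‖ ≤ ∫ x, C * ‖H (x + c / t) - H x‖ := by
    refine norm_integral_le_of_norm_le ((hHs.sub hH).norm.const_mul C) ?_
    filter_upwards [hq.ae hφC] with x hx
    rw [norm_mul, norm_sub_rev]
    exact mul_le_mul_of_nonneg_right hx (norm_nonneg _)
  rw [hdouble, norm_mul, RCLike.norm_ofNat, integral_const_mul] at hle
  linarith

theorem tendsto_integral_comp_mul_mul_of_ae_antiperiodic (hφ : AEStronglyMeasurable φ)
    (hφC : ∀ᵐ x, ‖φ x‖ ≤ C) (hanti : ∀ᵐ x, φ (x + c) = -φ x) (hH : Integrable H) :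
    Tendsto (fun t => ∫ x, φ (t * x) * H x) atTop (𝓝 0) := by
  have hshift : Tendsto (fun t => c / t) atTop (𝓝 0) := tendsto_const_nhds.div_atTop tendsto_id
  have hbound := ((tendsto_integral_norm_comp_add_right_sub hH).comp hshift).const_mul (C / 2)
  rw [mul_zero] at hbound
  refine squeeze_zero_norm' ?_ hbound
  filter_upwards [eventually_gt_atTop 0] with t ht
  exact norm_integral_comp_mul_mul_le hφ hφC hanti ht.ne' hH

theorem tendsto_setIntegral_comp_mul_mul {ψ h : ℝ → 𝕜} {m : 𝕜} {s : Set ℝ}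
    (hψ : AEStronglyMeasurable ψ) (hψC : ∀ᵐ x, ‖ψ x‖ ≤ C)
    (hanti : ∀ᵐ x, ψ (x + c) - m = -(ψ x - m)) (hs : MeasurableSet s) (hh : IntegrableOn h s) :
    Tendsto (fun t => ∫ x in s, ψ (t * x) * h x) atTop (𝓝 (m * ∫ x in s, h x)) := by
  have hψm : ∀ᵐ x, ‖ψ x - m‖ ≤ C + ‖m‖ := by
    filter_upwards [hψC] with x hx
    exact (norm_sub_le _ _).trans (by linarith)
  have hosc := tendsto_integral_comp_mul_mul_of_ae_antiperiodic (φ := (ψ · - m))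
    (hψ.sub aestronglyMeasurable_const) hψm hanti (hh.integrable_indicator hs)
  rw [← tendsto_sub_nhds_zero_iff]
  refine hosc.congr' ?_
  filter_upwards [eventually_ne_atTop 0] with t ht
  simp_rw [← Set.indicator_mul_right (f := fun x => ψ (t * x) - m), integral_indicator hs, sub_mul]
  have hψh : IntegrableOn (fun x => ψ (t * x) * h x) s :=
    integrable_comp_mul_mul Measure.absolutelyContinuous_restrict hψ hψC ht hh
  rw [integral_sub hψh (hh.const_mul m), integral_const_mul]

end Oscillation

theorem measurable_bfun : Measurable bfun :=
  ((measurable_const.indicator measurableSet_Ioo).comp measurable_fract).add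
    ((measurable_const.indicator measurableSet_Ioo).comp measurable_fract)

theorem bfun_eq_one {x : ℝ} (h : Int.fract x ∈ Set.Ioo (0 : ℝ) (1 / 2)) : bfun x = 1 := by
  have h' : Int.fract x ∉ Set.Ioo (1 / 2 : ℝ) 1 := fun h' => h.2.not_gt h'.1
  rw [bfun, Set.indicator_of_mem h, Set.indicator_of_notMem h', add_zero]

theorem bfun_eq_half {x : ℝ} (h : Int.fract x ∈ Set.Ioo (1 / 2 : ℝ) 1) : bfun x = 1 / 2 := by
  have h' : Int.fract x ∉ Set.Ioo (0 : ℝ) (1 / 2) := fun h' => h.1.not_gt h'.2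
  rw [bfun, Set.indicator_of_mem h, Set.indicator_of_notMem h', zero_add]

theorem ae_fract_ne_zero_and_ne_half : ∀ᵐ x : ℝ, Int.fract x ≠ 0 ∧ Int.fract x ≠ 1 / 2 := by
  filter_upwards [(Set.countable_range fun m : ℤ => (m : ℝ) / 2).ae_notMem volume] with x hx
  rw [← Int.self_sub_floor]
  refine ⟨fun h => hx ⟨2 * ⌊x⌋, ?_⟩, fun h => hx ⟨2 * ⌊x⌋ + 1, ?_⟩⟩ <;> push_cast <;> linarith

theorem ae_bfun_add_half :
    ∀ᵐ x, (bfun x = 1 ∧ bfun (x + 1 / 2) = 1 / 2) ∨ (bfun x = 1 / 2 ∧ bfun (x + 1 / 2) = 1) := by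
  filter_upwards [ae_fract_ne_zero_and_ne_half] with x ⟨h0, hhalf⟩
  have hfract := Int.self_sub_floor x
  rcases hhalf.lt_or_gt with hlt | hgt
  · have hx : Int.fract x ∈ Set.Ioo (0 : ℝ) (1 / 2) := ⟨(Int.fract_nonneg x).lt_of_ne' h0, hlt⟩
    have hshift : Int.fract (x + 1 / 2) = Int.fract x + 1 / 2 :=
      Int.fract_eq_iff.2 ⟨by linarith [hx.1], by linarith, ⌊x⌋, by linarith⟩
    exact .inl ⟨bfun_eq_one hx, bfun_eq_half (by rw [hshift]; constructor <;> linarith [hx.1])⟩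
  · have hx : Int.fract x ∈ Set.Ioo (1 / 2 : ℝ) 1 := ⟨hgt, Int.fract_lt_one x⟩
    have hshift : Int.fract (x + 1 / 2) = Int.fract x - 1 / 2 :=
      Int.fract_eq_iff.2 ⟨by linarith, by linarith [hx.2], ⌊x⌋ + 1, by push_cast; linarith⟩
    exact .inr ⟨bfun_eq_half hx, bfun_eq_one (by rw [hshift]; constructor <;> linarith [hx.2])⟩

/-- The multiplication operators by `x ↦ b(nx)` on `L²(0,1)` converge to `(3/4)·Id` in the weak
operator topology, while their inverses converge to `(3/2)·Id ≠ ((3/4)·Id)⁻¹`; hence inversion is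
not weak-operator continuous. -/
theorem stmt6 :
    (∀ f g : Lp ℂ 2 (volume.restrict (Set.Ioo (0 : ℝ) 1)),
      Tendsto
        (fun n : ℕ => ∫ x, bfun (n * x) * f x * (starRingEnd ℂ) (g x)
          ∂(volume.restrict (Set.Ioo (0 : ℝ) 1))) atTop
        (nhds ((3 / 4 : ℂ) *
          ∫ x, f x * (starRingEnd ℂ) (g x) ∂(volume.restrict (Set.Ioo (0 : ℝ) 1))))) ∧
    (∀ f g : Lp ℂ 2 (volume.restrict (Set.Ioo (0 : ℝ) 1)),
      Tendsto
        (fun n : ℕ => ∫ x, (bfun (n * x))⁻¹ * f x * (starRingEnd ℂ) (g x)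
          ∂(volume.restrict (Set.Ioo (0 : ℝ) 1))) atTop
        (nhds ((3 / 2 : ℂ) *
          ∫ x, f x * (starRingEnd ℂ) (g x) ∂(volume.restrict (Set.Ioo (0 : ℝ) 1))))) ∧
    (3 / 2 : ℂ) ≠ (3 / 4 : ℂ)⁻¹ := by
  have hfg (f g : Lp ℂ 2 (volume.restrict (Set.Ioo (0 : ℝ) 1))) :
      IntegrableOn (fun x => f x * starRingEnd ℂ (g x)) (Set.Ioo 0 1) := by
    simpa [IntegrableOn, mul_comm] using L2.integrable_inner (𝕜 := ℂ) g f
  have hb := ae_bfun_add_half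
  refine ⟨fun f g => ?_, fun f g => ?_, by norm_num⟩
  · have h := tendsto_setIntegral_comp_mul_mul measurable_bfun.aestronglyMeasurable
      (C := 1) (c := 1 / 2) (m := 3 / 4)
      (by filter_upwards [hb] with x hx; rcases hx with ⟨h, -⟩ | ⟨h, -⟩ <;> norm_num [h])
      (by filter_upwards [hb] with x hx; rcases hx with ⟨h, h'⟩ | ⟨h, h'⟩ <;> norm_num [h, h'])
      measurableSet_Ioo (hfg f g)
    simpa only [Function.comp_def, mul_assoc] using h.comp tendsto_natCast_atTop_atTop
  · have h := tendsto_setIntegral_comp_mul_mul measurable_bfun.inv.aestronglyMeasurable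
      (C := 2) (c := 1 / 2) (m := 3 / 2)
      (by filter_upwards [hb] with x hx; rcases hx with ⟨h, -⟩ | ⟨h, -⟩ <;> norm_num [h])
      (by filter_upwards [hb] with x hx; rcases hx with ⟨h, h'⟩ | ⟨h, h'⟩ <;> norm_num [h, h'])
      measurableSet_Ioo (hfg f g)
    simpa only [Function.comp_def, Pi.inv_apply, mul_assoc] using h.comp tendsto_natCast_atTop_atTop
end

section
/- Let H₀, H₁ be Hilbert spaces, B : dom(B) ⊆ H₀ → H₁ densely defined, closed, injective, with closed range. Let ι : range(B) ↪ H₁ be the inclusion and a ∈ L(H₁) satisfy Re⟨ι* a ι q, q⟩ ≥ α‖q‖² for all q ∈ range(B) and some α > 0. Then for every bounded conjugate-linear functional f on dom(B) (with graph norm) there exists a unique u ∈ dom(B) such that ⟨a Bu, Bv⟩ = f(v) for all v ∈ dom(B). -/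
open scoped InnerProductSpace

/-!
By the closed graph theorem `B⁻¹ : range B → H₀` is bounded, so `B` identifies `dom B` (graph
norm) with the Hilbert space `range B` (norm of `H₁`), and `f` becomes a bounded antilinear
functional there, represented by some `w` via Riesz. The equation then reads
`ι* a ι (B u) = w`, and a coercive operator on a Hilbert space is bijective: it is bounded below,
so its range is closed, and a vector orthogonal to its range is orthogonal to its own image,
which coercivity forces to vanish.
-/

section Coercive

variable {𝕜 E : Type*} [RCLike 𝕜] [NormedAddCommGroup E] [InnerProductSpace 𝕜 E]
  {A : E →L[𝕜] E} {α : ℝ}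

theorem ContinuousLinearMap.mul_norm_le_norm_apply_of_coercive
    (hA : ∀ x, α * ‖x‖ ^ 2 ≤ RCLike.re ⟪A x, x⟫_𝕜) (x : E) : α * ‖x‖ ≤ ‖A x‖ := by
  rcases (norm_nonneg x).eq_or_lt with hx | hx
  · simp [← hx]
  · refine le_of_mul_le_mul_right ?_ hx
    calc α * ‖x‖ * ‖x‖ = α * ‖x‖ ^ 2 := by ring
      _ ≤ RCLike.re ⟪A x, x⟫_𝕜 := hA x
      _ ≤ ‖⟪A x, x⟫_𝕜‖ := RCLike.re_le_norm _
      _ ≤ ‖A x‖ * ‖x‖ := norm_inner_le_norm _ _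

theorem ContinuousLinearMap.antilipschitz_of_coercive (hα : 0 < α)
    (hA : ∀ x, α * ‖x‖ ^ 2 ≤ RCLike.re ⟪A x, x⟫_𝕜) :
    AntilipschitzWith (Real.toNNReal α)⁻¹ A := by
  refine A.antilipschitz_of_bound fun x ↦ ?_
  rw [NNReal.coe_inv, Real.coe_toNNReal _ hα.le, inv_mul_eq_div, le_div_iff₀ hα, mul_comm]
  exact A.mul_norm_le_norm_apply_of_coercive hA x

theorem ContinuousLinearMap.bijective_of_coercive [CompleteSpace E] (hα : 0 < α)
    (hA : ∀ x, α * ‖x‖ ^ 2 ≤ RCLike.re ⟪A x, x⟫_𝕜) : Function.Bijective A := by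
  have hanti := A.antilipschitz_of_coercive hα hA
  refine ⟨hanti.injective, fun y ↦ ?_⟩
  have : CompleteSpace A.range :=
    (hanti.isClosed_range A.uniformContinuous).completeSpace_coe
  suffices A.range = ⊤ from LinearMap.range_eq_top.mp this y
  refine Submodule.orthogonal_eq_bot_iff.mp <| Submodule.eq_bot_iff _ |>.mpr fun x hx ↦ ?_
  have h0 : ⟪A x, x⟫_𝕜 = 0 :=
    Submodule.inner_right_of_mem_orthogonal (LinearMap.mem_range_self (A : E →ₗ[𝕜] E) x) hx
  have hx2 : ‖x‖ ^ 2 ≤ 0 := nonpos_of_mul_nonpos_right (by simpa [h0] using hA x) hα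
  simpa using hx2

theorem ContinuousLinearMap.existsUnique_inner_eq_of_coercive [CompleteSpace E] (hα : 0 < α)
    (hA : ∀ x, α * ‖x‖ ^ 2 ≤ RCLike.re ⟪A x, x⟫_𝕜) (φ : StrongDual 𝕜 E) :
    ∃! z, ∀ q, ⟪A z, q⟫_𝕜 = φ q := by
  have hrepr : ∀ z, (∀ q, ⟪A z, q⟫_𝕜 = φ q) ↔ A z = (InnerProductSpace.toDual 𝕜 E).symm φ :=
    fun z ↦ by
      simp only [← InnerProductSpace.toDual_symm_apply (y := φ)]
      exact ⟨ext_inner_right 𝕜, fun h q ↦ by rw [h]⟩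
  simp_rw [hrepr]
  exact (A.bijective_of_coercive hα hA).existsUnique _

end Coercive

namespace Submodule

variable {𝕜 H : Type*} [RCLike 𝕜] [NormedAddCommGroup H] [InnerProductSpace 𝕜 H]
  (K : Submodule 𝕜 H) [K.HasOrthogonalProjection]

/-- The compression `ι* a ι` of `a` to `K`, where `ι : K → H` is the inclusion. -/
noncomputable def compression (a : H →L[𝕜] H) : K →L[𝕜] K :=
  K.orthogonalProjectionOnto ∘L a ∘L K.subtypeL

theorem inner_compression_apply (a : H →L[𝕜] H) (p q : K) :
    ⟪K.compression a p, q⟫_𝕜 = ⟪a p, q⟫_𝕜 := by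
  simp [compression]

end Submodule

namespace LinearPMap

variable {𝕜 E F : Type*} [NontriviallyNormedField 𝕜]
  [NormedAddCommGroup E] [NormedSpace 𝕜 E] [CompleteSpace E]
  [NormedAddCommGroup F] [NormedSpace 𝕜 F] [CompleteSpace F] {T : E →ₗ.[𝕜] F}

theorem IsClosed.exists_norm_le_mul_norm_apply (hT : T.IsClosed)
    (hinj : Function.Injective (⇑T : T.domain → F))
    (hrange : _root_.IsClosed (Set.range (⇑T : T.domain → F))) :
    ∃ C, ∀ x : T.domain, ‖(x : E)‖ ≤ C * ‖T x‖ := by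
  have hker : LinearMap.ker T.toFun = ⊥ := LinearMap.ker_eq_bot.mpr hinj
  have : CompleteSpace T.inverse.domain := by
    rw [inverse_domain]
    exact hrange.completeSpace_coe
  -- closed graph theorem for `T⁻¹`, whose domain `range T` is complete
  have hcont : Continuous T.inverse.toFun := by
    refine LinearMap.continuous_of_isClosed_graph _ ?_
    have hgraph := (inverse_closed_iff hker).mpr hT
    convert hgraph.preimage (continuous_subtype_val.prodMap continuous_id) using 1
    ext ⟨y, x⟩
    simp [mem_graph_iff, eq_comm]
  let S : T.inverse.domain →L[𝕜] E := ⟨T.inverse.toFun, hcont⟩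
  refine ⟨‖S‖, fun x ↦ ?_⟩
  have hx : T x ∈ T.inverse.domain := by
    rw [inverse_domain]; exact LinearMap.mem_range_self _ x
  have hSx : S ⟨T x, hx⟩ = x := inverse_apply_eq hker rfl
  simpa [hSx] using S.le_opNorm ⟨T x, hx⟩

theorem IsClosed.exists_sqrt_norm_sq_add_norm_sq_le (hT : T.IsClosed)
    (hinj : Function.Injective (⇑T : T.domain → F))
    (hrange : _root_.IsClosed (Set.range (⇑T : T.domain → F))) :
    ∃ C, ∀ x : T.domain, √(‖(x : E)‖ ^ 2 + ‖T x‖ ^ 2) ≤ C * ‖T x‖ := by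
  obtain ⟨C, hC⟩ := hT.exists_norm_le_mul_norm_apply hinj hrange
  refine ⟨|C| + 1, fun x ↦ (Real.sqrt_le_left (by positivity)).mpr ?_⟩
  have hx : ‖(x : E)‖ ≤ |C| * ‖T x‖ :=
    (hC x).trans (mul_le_mul_of_nonneg_right (le_abs_self C) (norm_nonneg _))
  nlinarith [mul_self_le_mul_self (norm_nonneg _) hx, abs_nonneg C, norm_nonneg (T x)]

end LinearPMap

theorem exists_strongDual_apply_eq_conj {𝕜 D E : Type*} [RCLike 𝕜]
    [AddCommGroup D] [Module 𝕜 D] [NormedAddCommGroup E] [NormedSpace 𝕜 E]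
    (e : D ≃ₗ[𝕜] E) (f : D → 𝕜)
    (hf_add : ∀ u v, f (u + v) = f u + f v)
    (hf_smul : ∀ (c : 𝕜) u, f (c • u) = starRingEnd 𝕜 c * f u)
    {K : ℝ} (hK : ∀ u, ‖f u‖ ≤ K * ‖e u‖) :
    ∃ φ : StrongDual 𝕜 E, ∀ u, φ (e u) = starRingEnd 𝕜 (f u) := by
  let φ : E →ₗ[𝕜] 𝕜 :=
    { toFun q := starRingEnd 𝕜 (f (e.symm q))
      map_add' p q := by simp [hf_add]
      map_smul' c q := by simp [hf_smul] }
  refine ⟨φ.mkContinuous K fun q ↦ ?_, fun u ↦ by simp [φ]⟩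
  simpa [φ] using hK (e.symm q)

theorem stmt8_general {H₀ H₁ : Type*}
    [NormedAddCommGroup H₀] [InnerProductSpace ℂ H₀] [CompleteSpace H₀]
    [NormedAddCommGroup H₁] [InnerProductSpace ℂ H₁] [CompleteSpace H₁]
    (B : H₀ →ₗ.[ℂ] H₁) (hclosed : B.IsClosed)
    (hinj : Function.Injective (⇑B : B.domain → H₁))
    (hrange : IsClosed (Set.range (⇑B : B.domain → H₁)))
    (a : H₁ →L[ℂ] H₁) (α : ℝ) (hα : 0 < α)
    (hcoer : ∀ q ∈ Set.range (⇑B : B.domain → H₁), α * ‖q‖ ^ 2 ≤ (⟪a q, q⟫_ℂ).re)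
    (f : B.domain → ℂ)
    (hf_add : ∀ u v : B.domain, f (u + v) = f u + f v)
    (hf_smul : ∀ (c : ℂ) (u : B.domain), f (c • u) = (starRingEnd ℂ) c * f u)
    (hf_bdd : ∃ C : ℝ, ∀ u : B.domain,
      ‖f u‖ ≤ C * Real.sqrt (‖(u : H₀)‖ ^ 2 + ‖B u‖ ^ 2)) :
    ∃! u : B.domain, ∀ v : B.domain, ⟪B v, a (B u)⟫_ℂ = f v := by
  set E := LinearMap.range B.toFun
  have : CompleteSpace E := (show IsClosed (E : Set H₁) from hrange).completeSpace_coe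
  let e : B.domain ≃ₗ[ℂ] E := LinearEquiv.ofInjective B.toFun hinj
  have he : ∀ u, (e u : H₁) = B u := fun u ↦ rfl
  obtain ⟨C₀, hC₀⟩ := hclosed.exists_sqrt_norm_sq_add_norm_sq_le hinj hrange
  obtain ⟨C, hC⟩ := hf_bdd
  have hfB : ∀ u, ‖f u‖ ≤ |C| * C₀ * ‖e u‖ := fun u ↦
    calc ‖f u‖ ≤ |C| * √(‖(u : H₀)‖ ^ 2 + ‖B u‖ ^ 2) :=
          (hC u).trans (mul_le_mul_of_nonneg_right (le_abs_self C) (Real.sqrt_nonneg _))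
      _ ≤ |C| * C₀ * ‖e u‖ := by
          rw [mul_assoc]; exact mul_le_mul_of_nonneg_left (hC₀ u) (abs_nonneg C)
  obtain ⟨φ, hφ⟩ := exists_strongDual_apply_eq_conj e f hf_add hf_smul hfB
  have hcoerE : ∀ q : E, α * ‖q‖ ^ 2 ≤ RCLike.re ⟪E.compression a q, q⟫_ℂ := by
    rw [e.surjective.forall]
    intro u
    rw [E.inner_compression_apply]
    simpa [he] using hcoer _ ⟨u, rfl⟩
  have hweak : ∀ u,
      (∀ v, ⟪B v, a (B u)⟫_ℂ = f v) ↔ ∀ q, ⟪E.compression a (e u), q⟫_ℂ = φ q := by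
    intro u
    rw [e.surjective.forall]
    refine forall_congr' fun v ↦ ?_
    rw [hφ, E.inner_compression_apply, he, he, ← inner_conj_symm, starRingEnd_apply,
      starRingEnd_apply, star_eq_iff_star_eq, eq_comm]
  simp_rw [hweak]
  exact e.bijective.existsUnique_iff.mp
    ((E.compression a).existsUnique_inner_eq_of_coercive hα hcoerE φ)

/-- Lax–Milgram for divergence-form problems: if `B` is densely defined, closed, injective with
closed range, and `a` is coercive on `range B`, then for every bounded conjugate-linear
functional `f` on `dom(B)` (graph norm) there is a unique `u ∈ dom(B)` with
`⟨a B u, B v⟩ = f v` for all `v ∈ dom(B)`. -/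
theorem stmt8 {H₀ H₁ : Type*}
    [NormedAddCommGroup H₀] [InnerProductSpace ℂ H₀] [CompleteSpace H₀]
    [NormedAddCommGroup H₁] [InnerProductSpace ℂ H₁] [CompleteSpace H₁]
    (B : H₀ →ₗ.[ℂ] H₁) (hdense : Dense (B.domain : Set H₀)) (hclosed : B.IsClosed)
    (hinj : Function.Injective (⇑B : B.domain → H₁))
    (hrange : IsClosed (Set.range (⇑B : B.domain → H₁)))
    (a : H₁ →L[ℂ] H₁) (α : ℝ) (hα : 0 < α)
    (hcoer : ∀ q ∈ Set.range (⇑B : B.domain → H₁), α * ‖q‖ ^ 2 ≤ (⟪a q, q⟫_ℂ).re)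
    (f : B.domain → ℂ)
    (hf_add : ∀ u v : B.domain, f (u + v) = f u + f v)
    (hf_smul : ∀ (c : ℂ) (u : B.domain), f (c • u) = (starRingEnd ℂ) c * f u)
    (hf_bdd : ∃ C : ℝ, ∀ u : B.domain,
      ‖f u‖ ≤ C * Real.sqrt (‖(u : H₀)‖ ^ 2 + ‖B u‖ ^ 2)) :
    ∃! u : B.domain, ∀ v : B.domain, ⟪B v, a (B u)⟫_ℂ = f v :=
  stmt8_general B hclosed hinj hrange a α hα hcoer f hf_add hf_smul hf_bdd
end

section
/- Let H = H₀ ⊕ H₁ and suppose a, b ∈ L(H) with b boundedly invertible, b₀₀ boundedly invertible, and the compression (b⁻¹)₁₁ boundedly invertible. If b⁻¹ a π₀ = π₀ and a b⁻¹ π₁ = π₁, where π₀, π₁ are the orthogonal projections onto H₀ and H₁, then a = b. -/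
/-!
Since `b b⁻¹ = 1`, the identity `b⁻¹ a π₀ = π₀` says `a = b` on `H₀`, and `a b⁻¹ π₁ = π₁` says
`a = b` on `b⁻¹ H₁`. Splitting `b⁻¹ z = π₀ b⁻¹ z + π₁ b⁻¹ z` for `z ∈ H₁` and using agreement on `H₀`,
`a = b` on the range of the compression `(b⁻¹)₁₁`, which is all of `H₁` because `(b⁻¹)₁₁` is invertible.
-/

noncomputable section

variable {H : Type*} [NormedAddCommGroup H] [InnerProductSpace ℂ H] [CompleteSpace H]

/-- The `(i,j)` blocks of `a ∈ L(H)` with respect to `H = H₀ ⊕ H₁`. -/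
def blk00 (H₀ : Submodule ℂ H) [Submodule.HasOrthogonalProjection H₀] (a : H →L[ℂ] H) : H₀ →L[ℂ] H₀ :=
  (Submodule.orthogonalProjectionOnto H₀).comp (a.comp H₀.subtypeL)

def blk01 (H₀ H₁ : Submodule ℂ H) [Submodule.HasOrthogonalProjection H₀] (a : H →L[ℂ] H) :
    H₁ →L[ℂ] H₀ :=
  (Submodule.orthogonalProjectionOnto H₀).comp (a.comp H₁.subtypeL)

def blk10 (H₀ H₁ : Submodule ℂ H) [Submodule.HasOrthogonalProjection H₁] (a : H →L[ℂ] H) :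
    H₀ →L[ℂ] H₁ :=
  (Submodule.orthogonalProjectionOnto H₁).comp (a.comp H₀.subtypeL)

def blk11 (H₁ : Submodule ℂ H) [Submodule.HasOrthogonalProjection H₁] (a : H →L[ℂ] H) : H₁ →L[ℂ] H₁ :=
  (Submodule.orthogonalProjectionOnto H₁).comp (a.comp H₁.subtypeL)

/-- The operator on `H` given by a `2 × 2` block matrix with respect to `H = H₀ ⊕ H₁`. -/
def blkMat (H₀ H₁ : Submodule ℂ H) [Submodule.HasOrthogonalProjection H₀] [Submodule.HasOrthogonalProjection H₁]
    (c₀₀ : H₀ →L[ℂ] H₀) (c₀₁ : H₁ →L[ℂ] H₀) (c₁₀ : H₀ →L[ℂ] H₁) (c₁₁ : H₁ →L[ℂ] H₁) :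
    H →L[ℂ] H :=
  H₀.subtypeL.comp (c₀₀.comp (Submodule.orthogonalProjectionOnto H₀)) +
    H₀.subtypeL.comp (c₀₁.comp (Submodule.orthogonalProjectionOnto H₁)) +
    H₁.subtypeL.comp (c₁₀.comp (Submodule.orthogonalProjectionOnto H₀)) +
    H₁.subtypeL.comp (c₁₁.comp (Submodule.orthogonalProjectionOnto H₁))

open Submodule LinearMap

section

variable {𝕜 E F : Type*} [RCLike 𝕜] [NormedAddCommGroup E] [InnerProductSpace 𝕜 E]
  [AddCommGroup F] [Module 𝕜 F]

theorem Submodule.starProjection_orthogonal_mem_eqLocus (K : Submodule 𝕜 E)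
    [K.HasOrthogonalProjection] {f g : E →ₗ[𝕜] F} (hK : K ≤ eqLocus f g) {x : E}
    (hx : x ∈ eqLocus f g) : Kᗮ.starProjection x ∈ eqLocus f g := by
  rw [← K.starProjection_add_starProjection_orthogonal x] at hx
  exact ((eqLocus f g).add_mem_iff_right (hK (K.starProjection_apply_mem x))).1 hx

theorem Submodule.orthogonal_le_eqLocus_of_surjective_compression (K : Submodule 𝕜 E)
    [K.HasOrthogonalProjection] {f g : E →ₗ[𝕜] F} (c : E →L[𝕜] E) (hK : K ≤ eqLocus f g)
    (hc : ∀ z ∈ Kᗮ, c z ∈ eqLocus f g)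
    (hsurj : Function.Surjective (Kᗮ.orthogonalProjectionOnto ∘L c ∘L Kᗮ.subtypeL)) :
    Kᗮ ≤ eqLocus f g := by
  intro z hz
  obtain ⟨w, hw⟩ := hsurj ⟨z, hz⟩
  have hwz : Kᗮ.starProjection (c w) = z := congr_arg Subtype.val hw
  exact hwz ▸ K.starProjection_orthogonal_mem_eqLocus hK (hc w w.2)

end

theorem stmt13_general (H₀ H₁ : Submodule ℂ H) [Submodule.HasOrthogonalProjection H₀]
    [Submodule.HasOrthogonalProjection H₁] (hcompl : H₁ = H₀ᗮ)
    (a b b' : H →L[ℂ] H)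
    (hb₁ : b.comp b' = ContinuousLinearMap.id ℂ H)
    (hbinv11 : IsUnit (blk11 H₁ b'))
    (hπ₀ : (b'.comp a).comp (H₀.subtypeL.comp (Submodule.orthogonalProjectionOnto H₀)) =
      H₀.subtypeL.comp (Submodule.orthogonalProjectionOnto H₀))
    (hπ₁ : (a.comp b').comp (H₁.subtypeL.comp (Submodule.orthogonalProjectionOnto H₁)) =
      H₁.subtypeL.comp (Submodule.orthogonalProjectionOnto H₁)) :
    a = b := by
  subst hcompl
  have hbb' (x : H) : b (b' x) = x := congr($hb₁ x)
  have hH₀ : H₀ ≤ eqLocus (a : H →ₗ[ℂ] H) b := fun v hv => by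
    have hv' : b' (a v) = v := by
      simpa [← starProjection_apply, starProjection_eq_self_iff.2 hv] using congr($hπ₀ v)
    simpa [hv'] using (hbb' (a v)).symm
  have hb'H₁ : ∀ z ∈ H₀ᗮ, b' z ∈ eqLocus (a : H →ₗ[ℂ] H) b := fun z hz => by
    have hz' : a (b' z) = z := by
      simpa [← starProjection_apply, starProjection_eq_self_iff.2 hz] using congr($hπ₁ z)
    simp [hz', hbb']
  have hsurj : Function.Surjective (blk11 H₀ᗮ b') :=
    ((Module.End.isUnit_iff _).1 (hbinv11.map ContinuousLinearMap.toLinearMapRingHom)).2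
  have hH₁ := H₀.orthogonal_le_eqLocus_of_surjective_compression b' hH₀ hb'H₁ hsurj
  exact ext_on_codisjoint H₀.isCompl_orthogonal_of_hasOrthogonalProjection.codisjoint hH₀ hH₁

/-- If `b` is boundedly invertible with `b₀₀` and `(b⁻¹)₁₁` boundedly invertible, and
`b⁻¹ a π₀ = π₀` and `a b⁻¹ π₁ = π₁`, then `a = b`. -/
theorem stmt13 (H₀ H₁ : Submodule ℂ H) [Submodule.HasOrthogonalProjection H₀]
    [Submodule.HasOrthogonalProjection H₁] (hcompl : H₁ = H₀ᗮ)
    (a b b' : H →L[ℂ] H)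
    (hb₁ : b.comp b' = ContinuousLinearMap.id ℂ H)
    (hb₂ : b'.comp b = ContinuousLinearMap.id ℂ H)
    (hb00 : IsUnit (blk00 H₀ b))
    (hbinv11 : IsUnit (blk11 H₁ b'))
    (hπ₀ : (b'.comp a).comp (H₀.subtypeL.comp (Submodule.orthogonalProjectionOnto H₀)) =
      H₀.subtypeL.comp (Submodule.orthogonalProjectionOnto H₀))
    (hπ₁ : (a.comp b').comp (H₁.subtypeL.comp (Submodule.orthogonalProjectionOnto H₁)) =
      H₁.subtypeL.comp (Submodule.orthogonalProjectionOnto H₁)) :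
    a = b :=
  stmt13_general H₀ H₁ hcompl a b b' hb₁ hbinv11 hπ₀ hπ₁

end
end

section
/- Let H = H₀ ⊕ H₁, a ∈ L(H) boundedly invertible with a₀₀ boundedly invertible, and let v, w ∈ H. Then w = a v holds if and only if π₀ w = π₀ a v and π₁ v = π₁ a⁻¹ w, where π₀, π₁ are the orthogonal projections onto H₀ and H₁. -/
/-!
If `π₁ v = π₁ a⁻¹ w`, then `x = v - a⁻¹ w` lies in `H₀`, and if moreover `π₀ w = π₀ a v`, then
`a x = a v - w` lies in `H₀ᗮ`, i.e. `a₀₀ x = π₀ a x = 0`. Invertibility of `a₀₀` forces `x = 0`,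
so `v = a⁻¹ w`.
-/

noncomputable section

variable {H : Type*} [NormedAddCommGroup H] [InnerProductSpace ℂ H] [CompleteSpace H]

theorem ContinuousLinearMap.injective_of_isUnit {𝕜 E : Type*} [NormedField 𝕜]
    [NormedAddCommGroup E] [NormedSpace 𝕜 E] {f : E →L[𝕜] E} (hf : IsUnit f) :
    Function.Injective f :=
  ((Module.End.isUnit_iff _).mp (hf.map ContinuousLinearMap.toLinearMapRingHom)).injective

theorem Submodule.sub_mem_orthogonal_of_subtypeL_orthogonalProjectionOnto_eq {𝕜 E : Type*}
    [RCLike 𝕜] [NormedAddCommGroup E] [InnerProductSpace 𝕜 E] (K : Submodule 𝕜 E)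
    [K.HasOrthogonalProjection] {x y : E}
    (h : K.subtypeL (K.orthogonalProjectionOnto x) = K.subtypeL (K.orthogonalProjectionOnto y)) :
    x - y ∈ Kᗮ := by
  rw [← orthogonalProjectionOnto_eq_zero_iff, map_sub, sub_eq_zero]
  exact Subtype.ext h

theorem eq_zero_of_isUnit_blk00 {E : Type*} [NormedAddCommGroup E] [InnerProductSpace ℂ E]
    {H₀ : Submodule ℂ E} [H₀.HasOrthogonalProjection] {a : E →L[ℂ] E}
    (ha00 : IsUnit (blk00 H₀ a)) {x : E} (hx : x ∈ H₀) (hax : a x ∈ H₀ᗮ) : x = 0 := by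
  have hblk : blk00 H₀ a ⟨x, hx⟩ = blk00 H₀ a 0 := by
    rw [map_zero]
    exact (H₀.orthogonalProjectionOnto_eq_zero_iff (v := a x)).mpr hax
  exact congrArg Subtype.val (ContinuousLinearMap.injective_of_isUnit ha00 hblk)

/-- For boundedly invertible `a` with boundedly invertible `a₀₀`, one has `w = a v` if and only
if `π₀ w = π₀ a v` and `π₁ v = π₁ a⁻¹ w`. -/
theorem stmt14 (H₀ H₁ : Submodule ℂ H) [Submodule.HasOrthogonalProjection H₀]
    [Submodule.HasOrthogonalProjection H₁] (hcompl : H₁ = H₀ᗮ)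
    (a a' : H →L[ℂ] H)
    (ha₁ : a.comp a' = ContinuousLinearMap.id ℂ H)
    (ha₂ : a'.comp a = ContinuousLinearMap.id ℂ H)
    (ha00 : IsUnit (blk00 H₀ a))
    (v w : H) :
    w = a v ↔
      (H₀.subtypeL (Submodule.orthogonalProjectionOnto H₀ w) = H₀.subtypeL (Submodule.orthogonalProjectionOnto H₀ (a v)) ∧
        H₁.subtypeL (Submodule.orthogonalProjectionOnto H₁ v) =
          H₁.subtypeL (Submodule.orthogonalProjectionOnto H₁ (a' w))) := by
  have ha'a : a' (a v) = v := DFunLike.congr_fun ha₂ v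
  have haa' : a (a' w) = w := DFunLike.congr_fun ha₁ w
  constructor
  · rintro rfl
    exact ⟨rfl, by rw [ha'a]⟩
  · rintro ⟨h₀, h₁⟩
    have hx : v - a' w ∈ H₀ := by
      have := H₁.sub_mem_orthogonal_of_subtypeL_orthogonalProjectionOnto_eq h₁
      rwa [hcompl, Submodule.orthogonal_orthogonal] at this
    have hax : a (v - a' w) ∈ H₀ᗮ := by
      rw [map_sub, haa', ← neg_sub]
      exact neg_mem (H₀.sub_mem_orthogonal_of_subtypeL_orthogonalProjectionOnto_eq h₀)
    rw [← haa', sub_eq_zero.mp (eq_zero_of_isUnit_blk00 ha00 hx hax)]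

end
end

section
/- Let H be a Hilbert space, B : dom(B) ⊆ H → H skew-self-adjoint (B* = −B) with dom(B) ↪ H compact (with respect to the graph norm). Let (Tₙ)ₙ in L(H) with Re⟨Tₙ x, x⟩ ≥ c‖x‖² for all n, x and some c > 0, and suppose Tₙ → T in the weak operator topology. Then for every sequence (φₙ)ₙ converging weakly to φ in H, the solutions uₙ := (Tₙ + B)⁻¹ φₙ converge in norm to u := (T + B)⁻¹ φ. -/
/-!
Skewness of `B` gives `Re ⟪(S + B) v, v⟫ = Re ⟪S v, v⟫` on `dom B`, so uniform coercivity bounds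
`uₙ`, and then `B uₙ = φₙ - Tₙ uₙ`; here `(φₙ)` and `(Tₙ)` are bounded by the uniform boundedness
principle. Thus `(uₙ)` is bounded in the graph norm, and by the compact embedding every
subsequence has a norm-convergent subsequence. Its limit `x` satisfies `⟪T x - φ, v⟫ = ⟪x, B v⟫`
for all `v ∈ dom B`, i.e. `x ∈ dom B* = dom B` with `(T + B) x = φ`, and coercivity of `T` forces
`x = u`.
-/

open scoped InnerProductSpace
open Filter Topology

section WeakConvergence

variable {𝕜 E H : Type*} [RCLike 𝕜] [NormedAddCommGroup H] [InnerProductSpace 𝕜 H]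

theorem exists_norm_le_of_tendsto_inner [CompleteSpace H] {f : ℕ → H} {g : H → 𝕜}
    (hf : ∀ y, Tendsto (fun n => ⟪f n, y⟫_𝕜) atTop (𝓝 (g y))) : ∃ C, ∀ n, ‖f n‖ ≤ C := by
  obtain ⟨C, hC⟩ := banach_steinhaus (g := fun n => innerSL 𝕜 (f n)) fun y => by
    obtain ⟨C, hC⟩ := (hf y).norm.bddAbove_range
    exact ⟨C, fun n => hC ⟨n, rfl⟩⟩
  exact ⟨C, fun n => by simpa only [innerSL_apply_norm] using hC n⟩

theorem exists_opNorm_le_of_tendsto_inner [CompleteSpace H] [NormedAddCommGroup E]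
    [NormedSpace 𝕜 E] [CompleteSpace E] {T : ℕ → E →L[𝕜] H} {g : E → H → 𝕜}
    (hT : ∀ x y, Tendsto (fun n => ⟪T n x, y⟫_𝕜) atTop (𝓝 (g x y))) : ∃ C, ∀ n, ‖T n‖ ≤ C :=
  banach_steinhaus fun x => exists_norm_le_of_tendsto_inner (hT x)

theorem tendsto_inner_apply_of_tendsto [NormedAddCommGroup E] [NormedSpace 𝕜 E] {ι : Type*}
    {l : Filter ι} {T : ι → E →L[𝕜] H} {M : ℝ} (hM : ∀ i, ‖T i‖ ≤ M) {x : ι → E} {x' : E}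
    (hx : Tendsto x l (𝓝 x')) {y : H} {a : 𝕜}
    (hT : Tendsto (fun i => ⟪T i x', y⟫_𝕜) l (𝓝 a)) :
    Tendsto (fun i => ⟪T i (x i), y⟫_𝕜) l (𝓝 a) := by
  have hsmall : Tendsto (fun i => ⟪T i (x i - x'), y⟫_𝕜) l (𝓝 0) := by
    have hbound := ((tendsto_iff_norm_sub_tendsto_zero.1 hx).const_mul M).mul_const ‖y‖
    rw [mul_zero, zero_mul] at hbound
    refine squeeze_zero_norm (fun i => ?_) hbound
    calc ‖⟪T i (x i - x'), y⟫_𝕜‖ ≤ ‖T i (x i - x')‖ * ‖y‖ := norm_inner_le_norm _ _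
      _ ≤ M * ‖x i - x'‖ * ‖y‖ := by
        gcongr
        exact (T i).le_of_opNorm_le (hM i) _
  simpa only [map_sub, inner_sub_left, sub_add_cancel, zero_add] using hsmall.add hT

end WeakConvergence

namespace LinearPMap

variable {𝕜 H : Type*} [RCLike 𝕜] [NormedAddCommGroup H] [InnerProductSpace 𝕜 H]
  [CompleteSpace H] {B : H →ₗ.[𝕜] H}

theorem inner_neg_apply_eq_of_adjoint_eq_neg (hdense : Dense (B.domain : Set H))
    (hskew : B.adjoint = -B) (v w : B.domain) : ⟪-B v, w⟫_𝕜 = ⟪(v : H), B w⟫_𝕜 := by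
  have h := adjoint_isFormalAdjoint hdense
  rw [hskew] at h
  exact h v w

theorem re_inner_apply_self_eq_zero_of_adjoint_eq_neg (hdense : Dense (B.domain : Set H))
    (hskew : B.adjoint = -B) (v : B.domain) : RCLike.re ⟪B v, (v : H)⟫_𝕜 = 0 := by
  have h := congrArg RCLike.re (inner_neg_apply_eq_of_adjoint_eq_neg hdense hskew v v)
  rw [inner_neg_left, ← inner_conj_symm (v : H) (B v)] at h
  simp only [_root_.map_neg, RCLike.conj_re] at h
  linarith

theorem mul_norm_le_norm_add_apply_of_adjoint_eq_neg (hdense : Dense (B.domain : Set H))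
    (hskew : B.adjoint = -B) {S : H → H} {c : ℝ} (v : B.domain)
    (hS : c * ‖(v : H)‖ ^ 2 ≤ RCLike.re ⟪S v, (v : H)⟫_𝕜) :
    c * ‖(v : H)‖ ≤ ‖S v + B v‖ := by
  rcases (norm_nonneg (v : H)).eq_or_lt with hv | hv
  · rw [← hv, mul_zero]
    exact norm_nonneg _
  refine le_of_mul_le_mul_right ?_ hv
  calc c * ‖(v : H)‖ * ‖(v : H)‖ = c * ‖(v : H)‖ ^ 2 := by ring
    _ ≤ RCLike.re ⟪S v + B v, (v : H)⟫_𝕜 := by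
      simpa only [inner_add_left, _root_.map_add,
        re_inner_apply_self_eq_zero_of_adjoint_eq_neg hdense hskew, add_zero] using hS
    _ ≤ ‖S v + B v‖ * ‖(v : H)‖ := (RCLike.re_le_norm _).trans (norm_inner_le_norm _ _)

theorem eq_of_apply_add_eq_of_adjoint_eq_neg (hdense : Dense (B.domain : Set H))
    (hskew : B.adjoint = -B) {S : H →L[𝕜] H} {c : ℝ} (hc : 0 < c)
    (hS : ∀ x, c * ‖x‖ ^ 2 ≤ RCLike.re ⟪S x, x⟫_𝕜) {v w : B.domain} {f : H}
    (hv : S v + B v = f) (hw : S w + B w = f) : v = w := by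
  have hzero : S ↑(v - w) + B (v - w) = 0 := by
    rw [Submodule.coe_sub, _root_.map_sub, B.map_sub, sub_add_sub_comm, hv, hw, sub_self]
  have h := mul_norm_le_norm_add_apply_of_adjoint_eq_neg hdense hskew (v - w) (hS _)
  rw [hzero, norm_zero] at h
  have : ((v - w : B.domain) : H) = 0 :=
    norm_eq_zero.1 (le_antisymm (nonpos_of_mul_nonpos_right h hc) (norm_nonneg _))
  exact sub_eq_zero.1 (Subtype.ext this)

theorem exists_apply_eq_neg_of_inner_eq (hdense : Dense (B.domain : Set H))
    (hskew : B.adjoint = -B) {x w : H} (h : ∀ v : B.domain, ⟪w, (v : H)⟫_𝕜 = ⟪x, B v⟫_𝕜) :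
    ∃ xd : B.domain, (xd : H) = x ∧ B xd = -w := by
  have hx : x ∈ B.domain := by
    have := mem_adjoint_domain_of_exists x ⟨w, h⟩
    rwa [hskew] at this
  refine ⟨⟨x, hx⟩, rfl, hdense.eq_of_inner_left 𝕜 fun v hv => ?_⟩
  have hBx := inner_neg_apply_eq_of_adjoint_eq_neg hdense hskew ⟨x, hx⟩ ⟨v, hv⟩
  rw [inner_neg_left] at hBx
  rw [inner_neg_left, h ⟨v, hv⟩, ← hBx, neg_neg]

theorem exists_apply_add_eq_of_tendsto (hdense : Dense (B.domain : Set H))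
    (hskew : B.adjoint = -B) {ι : Type*} {l : Filter ι} [l.NeBot] {T : ι → H →L[𝕜] H}
    {T' : H →L[𝕜] H} {M : ℝ} (hM : ∀ i, ‖T i‖ ≤ M)
    (hT : ∀ x y, Tendsto (fun i => ⟪T i x, y⟫_𝕜) l (𝓝 ⟪T' x, y⟫_𝕜)) {φ : ι → H} {φ' : H}
    (hφ : ∀ y, Tendsto (fun i => ⟪φ i, y⟫_𝕜) l (𝓝 ⟪φ', y⟫_𝕜)) {u : ι → B.domain}
    (hu : ∀ i, T i (u i) + B (u i) = φ i) {x : H} (hx : Tendsto (fun i => (u i : H)) l (𝓝 x)) :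
    ∃ xd : B.domain, (xd : H) = x ∧ T' x + B xd = φ' := by
  obtain ⟨xd, rfl, hBx⟩ := exists_apply_eq_neg_of_inner_eq hdense hskew (w := T' x - φ') (x := x)
    fun v => by
      have hweak : ∀ i, ⟪T i (u i) - φ i, (v : H)⟫_𝕜 = ⟪(u i : H), B v⟫_𝕜 := fun i => by
        rw [← hu i, sub_add_cancel_left, inner_neg_apply_eq_of_adjoint_eq_neg hdense hskew]
      refine tendsto_nhds_unique ?_ (hx.inner tendsto_const_nhds)
      simp only [← hweak, inner_sub_left]
      exact (tendsto_inner_apply_of_tendsto hM hx (hT x v)).sub (hφ v)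
  exact ⟨xd, rfl, by rw [hBx]; abel⟩

end LinearPMap

open LinearPMap in
/-- Let `B` be skew-self-adjoint with compactly embedded domain (graph norm), `(Tₙ)` uniformly
coercive and converging to `T` in the weak operator topology, and `φₙ ⇀ φ` weakly. Then the
solutions `uₙ` of `(Tₙ + B) uₙ = φₙ` converge in norm to the solution `u` of `(T + B) u = φ`. -/
theorem stmt15 {H : Type*} [NormedAddCommGroup H] [InnerProductSpace ℂ H] [CompleteSpace H]
    (B : H →ₗ.[ℂ] H) (hdense : Dense (B.domain : Set H))
    (hskew : B.adjoint = -B)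
    (hcompact : ∀ u : ℕ → B.domain,
      (∃ C : ℝ, ∀ n, ‖((u n : H))‖ ^ 2 + ‖B (u n)‖ ^ 2 ≤ C) →
      ∃ φ : ℕ → ℕ, StrictMono φ ∧ ∃ x : H,
        Tendsto (fun n => ((u (φ n) : H))) atTop (nhds x))
    (T : ℕ → H →L[ℂ] H) (T' : H →L[ℂ] H) (c : ℝ) (hc : 0 < c)
    (hcoer : ∀ n, ∀ x : H, c * ‖x‖ ^ 2 ≤ (⟪T n x, x⟫_ℂ).re)
    (hTconv : ∀ x y : H, Tendsto (fun n => ⟪T n x, y⟫_ℂ) atTop (nhds ⟪T' x, y⟫_ℂ))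
    (φ : ℕ → H) (φ' : H)
    (hφ : ∀ y : H, Tendsto (fun n => ⟪φ n, y⟫_ℂ) atTop (nhds ⟪φ', y⟫_ℂ))
    (u : ℕ → B.domain) (u' : B.domain)
    (hu : ∀ n, T n (u n : H) + B (u n) = φ n)
    (hu' : T' (u' : H) + B u' = φ') :
    Tendsto (fun n => ((u n : H))) atTop (nhds (u' : H)) := by
  have hcoer' : ∀ x : H, c * ‖x‖ ^ 2 ≤ (⟪T' x, x⟫_ℂ).re := fun x =>
    ge_of_tendsto' ((Complex.continuous_re.tendsto _).comp (hTconv x x)) fun n => hcoer n x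
  obtain ⟨Mφ, hMφ⟩ := exists_norm_le_of_tendsto_inner hφ
  obtain ⟨MT, hMT⟩ := exists_opNorm_le_of_tendsto_inner hTconv
  have hu_le : ∀ n, ‖(u n : H)‖ ≤ Mφ / c := fun n => (le_div_iff₀' hc).2 <|
    (hu n ▸ mul_norm_le_norm_add_apply_of_adjoint_eq_neg hdense hskew (u n) (hcoer n _)).trans
      (hMφ n)
  have hBu_le : ∀ n, ‖B (u n)‖ ≤ Mφ + MT * (Mφ / c) := fun n => by
    rw [eq_sub_of_add_eq' (hu n)]
    exact (norm_sub_le _ _).trans (add_le_add (hMφ n)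
      (((T n).le_opNorm _).trans
        (mul_le_mul (hMT n) (hu_le n) (norm_nonneg _) ((norm_nonneg _).trans (hMT 0)))))
  refine tendsto_of_subseq_tendsto fun ns hns => ?_
  obtain ⟨ψ, hψ, x, hx⟩ := hcompact (u ∘ ns) ⟨_, fun k => add_le_add
    (pow_le_pow_left₀ (norm_nonneg _) (hu_le _) 2) (pow_le_pow_left₀ (norm_nonneg _) (hBu_le _) 2)⟩
  have hm := hns.comp hψ.tendsto_atTop
  obtain ⟨xd, rfl, hxd⟩ := exists_apply_add_eq_of_tendsto hdense hskew (fun k => hMT _)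
    (fun x y => (hTconv x y).comp hm) (fun y => (hφ y).comp hm) (fun k => hu _) hx
  rw [eq_of_apply_add_eq_of_adjoint_eq_neg hdense hskew hc hcoer' hxd hu'] at hx
  exact ⟨ψ, hx⟩
end

section
/- Let H be a Hilbert space and B : dom(B) ⊆ H → H skew-self-adjoint with Re⟨T x, x⟩ ≥ c‖x‖² for a bounded operator T ∈ L(H) and some c > 0. Then T + B (with domain dom(B)) is boundedly invertible and ‖(T + B)⁻¹‖ ≤ 1/c. -/
open scoped InnerProductSpace
open Filter Topology

/-!
Since `Re ⟪B u, u⟫ = 0`, the form `Re ⟪(T + B) u, u⟫` is still bounded below by `c ‖u‖²`, which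
gives `c ‖u‖ ≤ ‖(T + B) u‖` and hence injectivity. The graph of `B = -B†` is closed, so a limit
of `(T + B) uₙ` is again in the range: `uₙ` is Cauchy by the lower bound, and `B uₙ` converges
because `T uₙ` does. Finally a vector `v` orthogonal to the range satisfies
`⟪v, B u⟫ = -⟪T† v, u⟫` for all `u`, so `v ∈ dom B† = dom B`, and testing against `u = v`
gives `c ‖v‖² ≤ 0`.
-/

theorem mul_norm_le_norm_of_mul_sq_le_re_inner {𝕜 E : Type*} [RCLike 𝕜] [NormedAddCommGroup E]
    [InnerProductSpace 𝕜 E] {c : ℝ} {x y : E} (h : c * ‖x‖ ^ 2 ≤ RCLike.re ⟪y, x⟫_𝕜) :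
    c * ‖x‖ ≤ ‖y‖ := by
  rcases (norm_nonneg x).eq_or_lt with hx | hx
  · simp [← hx]
  · refine le_of_mul_le_mul_right ?_ hx
    calc c * ‖x‖ * ‖x‖ = c * ‖x‖ ^ 2 := by ring
      _ ≤ ‖y‖ * ‖x‖ := h.trans (re_inner_le_norm y x)

theorem LinearMap.surjective_of_isClosed_range_of_forall_inner_eq_zero {𝕜 M H : Type*} [RCLike 𝕜]
    [AddCommGroup M] [Module 𝕜 M] [NormedAddCommGroup H] [InnerProductSpace 𝕜 H] [CompleteSpace H]
    (L : M →ₗ[𝕜] H) (hclosed : IsClosed (Set.range L))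
    (horth : ∀ v : H, (∀ u, ⟪L u, v⟫_𝕜 = 0) → v = 0) : Function.Surjective L := by
  rw [← LinearMap.coe_range] at hclosed
  rw [← LinearMap.range_eq_top, ← hclosed.submodule_topologicalClosure_eq,
    Submodule.topologicalClosure_eq_top_iff, Submodule.eq_bot_iff]
  intro v hv
  exact horth v fun u => (Submodule.mem_orthogonal _ v).1 hv _ (LinearMap.mem_range_self L u)

namespace LinearPMap

theorem IsClosed.isClosed_range_add_of_mul_norm_le {𝕜 E F : Type*} [NormedField 𝕜]
    [NormedAddCommGroup E] [NormedSpace 𝕜 E] [CompleteSpace E]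
    [NormedAddCommGroup F] [NormedSpace 𝕜 F]
    {B : E →ₗ.[𝕜] F} (hB : B.IsClosed) (T : E →L[𝕜] F) {c : ℝ} (hc : 0 < c)
    (hbound : ∀ u : B.domain, c * ‖(u : E)‖ ≤ ‖T u + B u‖) :
    _root_.IsClosed (Set.range fun u : B.domain => T u + B u) := by
  refine IsSeqClosed.isClosed fun f f₀ hf hf₀ => ?_
  choose u hu using hf
  have hcauchy : CauchySeq fun n => (u n : E) := by
    refine Metric.cauchySeq_iff.2 fun ε hε => ?_
    obtain ⟨N, hN⟩ := Metric.cauchySeq_iff.1 hf₀.cauchySeq (c * ε) (by positivity)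
    refine ⟨N, fun m hm n hn => ?_⟩
    have h : c * dist (u m : E) (u n) ≤ dist (f m) (f n) := by
      simpa [← hu, dist_eq_norm, add_sub_add_comm, LinearPMap.map_sub] using hbound (u m - u n)
    exact lt_of_mul_lt_mul_left (h.trans_lt (hN m hm n hn)) hc.le
  obtain ⟨x, hx⟩ := cauchySeq_tendsto_of_complete hcauchy
  have hBu : Tendsto (fun n => B (u n)) atTop (𝓝 (f₀ - T x)) := by
    have h : (fun n => B (u n)) = fun n => f n - T (u n) := funext fun n => by simp [← hu n]
    exact h ▸ hf₀.sub ((T.continuous.tendsto x).comp hx)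
  have hgraph : (x, f₀ - T x) ∈ B.graph :=
    IsClosed.mem_of_tendsto hB (hx.prodMk_nhds hBu) (.of_forall fun n => B.mem_graph (u n))
  obtain ⟨y, rfl, hy⟩ := B.mem_graph_iff.1 hgraph
  exact ⟨y, by simp [hy]⟩

section SkewAdjoint

variable {𝕜 H : Type*} [RCLike 𝕜] [NormedAddCommGroup H] [InnerProductSpace 𝕜 H]
  [CompleteSpace H] {B : H →ₗ.[𝕜] H}

theorem mem_graph_adjoint_iff_of_adjoint_eq_neg (hskew : B† = -B) {x y : H} :
    (x, y) ∈ B†.graph ↔ (x, -y) ∈ B.graph := by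
  rw [hskew, mem_graph_iff, mem_graph_iff]
  simp [neg_eq_iff_eq_neg]

theorem isClosed_of_adjoint_eq_neg (hdense : Dense (B.domain : Set H)) (hskew : B† = -B) :
    B.IsClosed := by
  have h : (B.graph : Set (H × H)) = (fun p : H × H => (p.1, -p.2)) ⁻¹' B†.graph := by
    ext ⟨x, y⟩
    simp [mem_graph_adjoint_iff_of_adjoint_eq_neg hskew]
  rw [LinearPMap.IsClosed, h]
  exact (adjoint_isClosed hdense).preimage (by fun_prop)

theorem inner_apply_eq_neg_inner_apply (hdense : Dense (B.domain : Set H)) (hskew : B† = -B)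
    (u v : B.domain) : ⟪B u, v⟫_𝕜 = -⟪(u : H), B v⟫_𝕜 := by
  have hu : ((u : H), -B u) ∈ B†.graph :=
    (mem_graph_adjoint_iff_of_adjoint_eq_neg hskew).2 (by rw [neg_neg]; exact B.mem_graph u)
  obtain ⟨w, hwu, hw⟩ := (B†).mem_graph_iff.1 hu
  have h := adjoint_isFormalAdjoint hdense w v
  simp only [hw, hwu, inner_neg_left] at h
  rw [← h, neg_neg]

theorem re_inner_apply_self_eq_zero (hdense : Dense (B.domain : Set H)) (hskew : B† = -B)
    (u : B.domain) : RCLike.re ⟪B u, u⟫_𝕜 = 0 := by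
  have h := congrArg RCLike.re (inner_apply_eq_neg_inner_apply hdense hskew u u)
  simp only [_root_.map_neg] at h
  linarith [inner_re_symm (𝕜 := 𝕜) (B u : H) u]

variable {T : H →L[𝕜] H} {c : ℝ}

theorem mul_sq_norm_le_re_inner_add_apply (hdense : Dense (B.domain : Set H))
    (hskew : B† = -B) (hcoer : ∀ x, c * ‖x‖ ^ 2 ≤ RCLike.re ⟪T x, x⟫_𝕜) (u : B.domain) :
    c * ‖(u : H)‖ ^ 2 ≤ RCLike.re ⟪T u + B u, (u : H)⟫_𝕜 := by
  rw [inner_add_left, _root_.map_add, re_inner_apply_self_eq_zero hdense hskew, add_zero]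
  exact hcoer u

theorem mul_norm_le_norm_add_apply (hdense : Dense (B.domain : Set H))
    (hskew : B† = -B) (hcoer : ∀ x, c * ‖x‖ ^ 2 ≤ RCLike.re ⟪T x, x⟫_𝕜) (u : B.domain) :
    c * ‖(u : H)‖ ≤ ‖T u + B u‖ :=
  mul_norm_le_norm_of_mul_sq_le_re_inner (mul_sq_norm_le_re_inner_add_apply hdense hskew hcoer u)

theorem eq_zero_of_forall_inner_add_apply_eq_zero (hdense : Dense (B.domain : Set H))
    (hskew : B† = -B) (hc : 0 < c) (hcoer : ∀ x, c * ‖x‖ ^ 2 ≤ RCLike.re ⟪T x, x⟫_𝕜) {v : H}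
    (hv : ∀ u : B.domain, ⟪T u + B u, v⟫_𝕜 = 0) : v = 0 := by
  have hadj : ∀ u : B.domain, ⟪-(ContinuousLinearMap.adjoint T v), (u : H)⟫_𝕜 = ⟪v, B u⟫_𝕜 := by
    intro u
    have h := inner_eq_zero_symm.1 (hv u)
    rw [inner_add_right] at h
    rw [inner_neg_left, ContinuousLinearMap.adjoint_inner_left]
    linear_combination -h
  have hvB : v ∈ B.domain := by
    have h := mem_adjoint_domain_of_exists v ⟨_, hadj⟩
    rwa [hskew] at h
  have h := mul_sq_norm_le_re_inner_add_apply hdense hskew hcoer ⟨v, hvB⟩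
  rw [hv ⟨v, hvB⟩, _root_.map_zero] at h
  simpa using nonpos_of_mul_nonpos_right h hc

end SkewAdjoint

end LinearPMap

/-- If `B` is skew-self-adjoint and `T` is bounded with `Re ⟪T x, x⟫ ≥ c ‖x‖²`, then `T + B`
(with domain `dom B`) is boundedly invertible with `‖(T + B)⁻¹‖ ≤ 1/c`. -/
theorem stmt16 {H : Type*} [NormedAddCommGroup H] [InnerProductSpace ℂ H] [CompleteSpace H]
    (B : H →ₗ.[ℂ] H) (hdense : Dense (B.domain : Set H))
    (hskew : B.adjoint = -B)
    (T : H →L[ℂ] H) (c : ℝ) (hc : 0 < c)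
    (hcoer : ∀ x : H, c * ‖x‖ ^ 2 ≤ (⟪T x, x⟫_ℂ).re) :
    Function.Bijective (fun u : B.domain => T (u : H) + B u) ∧
      ∀ u : B.domain, c * ‖(u : H)‖ ≤ ‖T (u : H) + B u‖ := by
  let L : B.domain →ₗ[ℂ] H := T.toLinearMap ∘ₗ B.domain.subtype + B.toFun
  have hbound : ∀ u : B.domain, c * ‖(u : H)‖ ≤ ‖L u‖ :=
    B.mul_norm_le_norm_add_apply hdense hskew hcoer
  have hinj : Function.Injective L := by
    refine (injective_iff_map_eq_zero L).2 fun u hu => ?_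
    have h := hbound u
    rw [hu, norm_zero] at h
    exact Subtype.ext (norm_le_zero_iff.1 (nonpos_of_mul_nonpos_right h hc))
  have hsurj : Function.Surjective L :=
    L.surjective_of_isClosed_range_of_forall_inner_eq_zero
      ((B.isClosed_of_adjoint_eq_neg hdense hskew).isClosed_range_add_of_mul_norm_le T hc hbound)
      fun _ hv => B.eq_zero_of_forall_inner_add_apply_eq_zero hdense hskew hc hcoer hv
  exact ⟨⟨hinj, hsurj⟩, hbound⟩
end
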